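/- arXiv:1701.01059 — 2 statements merged into one kernel-verified Lean document; each statement's English description precedes it below -/
import Mathlib

section
/- Let m ≥ 2 and let d be an integer with 1 ≤ d ≤ m−1. Suppose c = Σ_η τ(η)·(b(η) + 1̂) ∈ A, where the sum runs over all subsets η ⊆ {0, …, m−1} with m − d ≤ |η| < m and τ(η) ∈ F_2, and let f ∈ A satisfy w(f) ≤ 2^{m−d−1} − 1. Set v = c + f. Then for every subset κ ⊆ {0, …, m−1} with |κ| = m − d, writing κᶜ = {0, …, m−1} ∖ κ, one has v·b(κᶜ) = τ(κ)·1̂ + f·b(κᶜ), and moreover τ(κ) = 0 if and only if w(v·b(κᶜ)) < 2^{m−1}. -/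
open MvPolynomial

/-- The weighted degree: total degree of `F(Y_0^{w_0}, …, Y_{m-1}^{w_{m-1}})`. -/
noncomputable def wdeg {F : Type*} [CommSemiring F] {m : ℕ} (w : Fin m → ℕ)
    (f : MvPolynomial (Fin m) F) : ℕ :=
  ((MvPolynomial.bind₁ (fun l : Fin m => (MvPolynomial.X l : MvPolynomial (Fin m) F) ^ (w l))) f).totalDegree

/-- The weighted Reed–Muller code `WRMC_ω(m,q)` as a subspace of `F^{q^m}`. -/
noncomputable def WRMC (F : Type*) [CommSemiring F] [Fintype F] (m : ℕ) (w : Fin m → ℕ) (ω : ℕ) :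
    Submodule F ((Fin m → F) → F) :=
  Submodule.span F
    {v | ∃ f : MvPolynomial (Fin m) F, wdeg w f ≤ ω ∧ v = fun P => MvPolynomial.eval P f}

/-- The generalized Reed–Muller code `C_ω(m,q)`. -/
noncomputable def GRM (F : Type*) [CommSemiring F] [Fintype F] (m ω : ℕ) :
    Submodule F ((Fin m → F) → F) :=
  Submodule.span F
    {v | ∃ f : MvPolynomial (Fin m) F, f.totalDegree ≤ ω ∧ v = fun P => MvPolynomial.eval P f}

/-- The homogeneous Reed–Muller code `HRMC_d(m,q)`. -/
noncomputable def HRMC (F : Type*) [CommSemiring F] [Fintype F] (m d : ℕ) :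
    Submodule F ((Fin m → F) → F) :=
  Submodule.span F
    {v | ∃ f : MvPolynomial (Fin m) F, f.IsHomogeneous d ∧ v = fun P => MvPolynomial.eval P f}

/-- The ideal `(X_0^p - 1, …, X_{m-1}^p - 1)`. -/
noncomputable def Aideal (p m : ℕ) : Ideal (MvPolynomial (Fin m) (ZMod p)) :=
  Ideal.span (Set.range fun l : Fin m => (MvPolynomial.X l : MvPolynomial (Fin m) (ZMod p)) ^ p - 1)

/-- The modular algebra `A = F_p[X_0,…,X_{m-1}]/(X_0^p-1,…,X_{m-1}^p-1)`. -/
abbrev ModA (p m : ℕ) : Type := MvPolynomial (Fin m) (ZMod p) ⧸ Aideal p m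

/-- `x_l`, the image of `X_l` in `A`. -/
noncomputable def xA (p m : ℕ) (l : Fin m) : ModA p m :=
  Ideal.Quotient.mk (Aideal p m) (MvPolynomial.X l)

/-- The identification `ψ : F_p^{p^m} → A` sending `(c_j)` to `Σ_j c_j x_0^{j_0} ⋯ x_{m-1}^{j_{m-1}}`. -/
noncomputable def psi (p m : ℕ) [NeZero p] : ((Fin m → ZMod p) → ZMod p) →ₗ[ZMod p] ModA p m where
  toFun c := ∑ j : Fin m → ZMod p, c j • ∏ l, (xA p m l) ^ (j l).val
  map_add' a b := by simp [add_smul, Finset.sum_add_distrib]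
  map_smul' r a := by simp [Finset.smul_sum, smul_smul]

/-- `b(η) = ∏_{l ∈ η} (x_l - 1)` in the binary algebra `A`. -/
noncomputable def bElt (m : ℕ) (η : Finset (Fin m)) : ModA 2 m :=
  ∏ l ∈ η, (xA 2 m l - 1)


/-!
Multiplying by `b(κᶜ)` kills `1̂` and every `b(η)` with `η ⊄ κ`, because `(x_l - 1)² = 0`; among
the `η` with `|η| ≥ m - d` only `κ` lies inside `κ`, and `b(κ) b(κᶜ) = 1̂`. This gives the identity.
For the weight criterion, `ψ` identifies `A` with the group algebra `𝔽_p[(ℤ/p)^m]`, in which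
`x_l` is the `l`-th basis vector and the Hamming weight is the size of the support. Multiplying
by `x_l - 1` at most doubles the support, so `w(f b(κᶜ)) ≤ 2^d w(f) < 2^(m-1)`, while adding the
all-one word `1̂` turns a word of weight `w` into one of weight `2^m - w > 2^(m-1)`.
-/

namespace AddMonoidAlgebra

variable (k G : Type*) [Semiring k]

noncomputable def equivFunOnFinite [Finite G] : (G → k) ≃ₗ[k] AddMonoidAlgebra k G :=
  (Finsupp.linearEquivFunOnFinite k k G).symm ≪≫ₗ (coeffLinearEquiv k).symm

variable {k G}

@[simp]
lemma coeff_equivFunOnFinite [Finite G] (u : G → k) (g : G) :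
    (equivFunOnFinite k G u).coeff g = u g := rfl

lemma card_support_equivFunOnFinite [Fintype G] [DecidableEq k] (u : G → k) :
    (equivFunOnFinite k G u).coeff.support.card = hammingNorm u := by
  classical
  rw [hammingNorm]
  congr 1
  ext g
  simp

section CommRing

variable {k G : Type*} [CommRing k] [AddCommGroup G]

lemma card_support_mul_of'_sub_one_le (r : AddMonoidAlgebra k G) (g : G) :
    (r * (of' k G g - 1)).coeff.support.card ≤ 2 * r.coeff.support.card := by
  classical
  calc (r * (of' k G g - 1)).coeff.support.card
      ≤ ((r * of' k G g).coeff.support ∪ r.coeff.support).card := by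
        rw [mul_sub, mul_one, coeff_sub]
        exact Finset.card_le_card Finsupp.support_sub
    _ ≤ (r * of' k G g).coeff.support.card + r.coeff.support.card := Finset.card_union_le _ _
    _ = 2 * r.coeff.support.card := by
        rw [of'_apply, support_coeff_mul_single _ _ (by simp), Finset.card_map, two_mul]

lemma card_support_mul_prod_of'_sub_one_le {ι : Type*} (r : AddMonoidAlgebra k G)
    (s : Finset ι) (g : ι → G) :
    (r * ∏ i ∈ s, (of' k G (g i) - 1)).coeff.support.card ≤ 2 ^ s.card * r.coeff.support.card := by
  classical
  induction s using Finset.induction_on with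
  | empty => simp
  | insert a s ha ih =>
    rw [Finset.prod_insert ha, mul_comm (of' k G (g a) - 1), ← mul_assoc,
      Finset.card_insert_of_notMem ha, pow_succ', Nat.mul_assoc 2]
    exact (card_support_mul_of'_sub_one_le (r * ∏ i ∈ s, (of' k G (g i) - 1)) (g a)).trans
      (Nat.mul_le_mul_left 2 ih)

end CommRing

end AddMonoidAlgebra

section GroupAlgebra

variable {p m : ℕ}

lemma xA_pow_self (l : Fin m) : xA p m l ^ p = 1 := by
  rw [xA, ← map_pow, ← map_one (Ideal.Quotient.mk (Aideal p m)), Ideal.Quotient.eq]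
  exact Ideal.subset_span ⟨l, rfl⟩

lemma xA_pow_val_add [NeZero p] (l : Fin m) (a b : ZMod p) :
    xA p m l ^ (a + b).val = xA p m l ^ a.val * xA p m l ^ b.val := by
  rw [← pow_add, ZMod.val_add, ← pow_eq_pow_mod _ (xA_pow_self l)]

variable (p m) [NeZero p]

noncomputable def monomialHom : Multiplicative (Fin m → ZMod p) →* ModA p m where
  toFun j := ∏ l, xA p m l ^ (j.toAdd l).val
  map_one' := by simp
  map_mul' a b := by
    simp only [toAdd_mul, Pi.add_apply, xA_pow_val_add, Finset.prod_mul_distrib]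

noncomputable def ofGroupAlgebra : AddMonoidAlgebra (ZMod p) (Fin m → ZMod p) →ₐ[ZMod p] ModA p m :=
  AddMonoidAlgebra.lift _ _ _ (monomialHom p m)

noncomputable def toGroupAlgebra : ModA p m →ₐ[ZMod p] AddMonoidAlgebra (ZMod p) (Fin m → ZMod p) :=
  Ideal.Quotient.liftₐ (Aideal p m)
    (aeval fun l => AddMonoidAlgebra.of' _ _ (Pi.single l 1)) fun a ha => by
      refine (Submodule.span_le (p := RingHom.ker _)).mpr ?_ ha
      rintro _ ⟨l, rfl⟩
      simp [AddMonoidAlgebra.of'_apply, AddMonoidAlgebra.single_pow, ← Pi.single_smul,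
        ← AddMonoidAlgebra.one_def]

lemma toGroupAlgebra_monomialHom (j : Multiplicative (Fin m → ZMod p)) :
    toGroupAlgebra p m (monomialHom p m j) = AddMonoidAlgebra.of' _ _ j.toAdd := by
  have hx (l : Fin m) : toGroupAlgebra p m (xA p m l) = AddMonoidAlgebra.of' _ _ (Pi.single l 1) :=
    aeval_X _ l
  simp only [monomialHom, MonoidHom.coe_mk, OneHom.coe_mk, map_prod, map_pow, hx,
    AddMonoidAlgebra.of'_apply, AddMonoidAlgebra.single_pow, one_pow, AddMonoidAlgebra.prod_single,
    Finset.prod_const_one]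
  congr 1
  conv_rhs => rw [← Finset.univ_sum_single j.toAdd]
  simp_rw [← Pi.single_smul, nsmul_eq_mul, mul_one, ZMod.natCast_zmod_val]

lemma toGroupAlgebra_ofGroupAlgebra (r : AddMonoidAlgebra (ZMod p) (Fin m → ZMod p)) :
    toGroupAlgebra p m (ofGroupAlgebra p m r) = r := by
  induction r using AddMonoidAlgebra.induction_linear with
  | zero => simp
  | add r s hr hs => simp [hr, hs]
  | single j a =>
    rw [ofGroupAlgebra, AddMonoidAlgebra.lift_single, map_smul, toGroupAlgebra_monomialHom]
    simp [AddMonoidAlgebra.of'_apply]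

lemma ofGroupAlgebra_injective : Function.Injective (ofGroupAlgebra p m) :=
  Function.LeftInverse.injective (toGroupAlgebra_ofGroupAlgebra p m)

end GroupAlgebra

open AddMonoidAlgebra in
lemma psi_eq_ofGroupAlgebra {p m : ℕ} [NeZero p] (u : (Fin m → ZMod p) → ZMod p) :
    psi p m u = ofGroupAlgebra p m (equivFunOnFinite _ _ u) := by
  rw [ofGroupAlgebra, lift_apply, Finsupp.sum_fintype _ _ (by simp)]
  rfl

lemma psi_injective (p m : ℕ) [NeZero p] : Function.Injective (psi p m) := by
  intro u w h
  simp only [psi_eq_ofGroupAlgebra] at h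
  exact (AddMonoidAlgebra.equivFunOnFinite _ _).injective (ofGroupAlgebra_injective p m h)

section Binary

variable {m : ℕ}

lemma two_eq_zero_modA : (2 : ModA 2 m) = 0 := by
  rw [← map_ofNat (algebraMap (ZMod 2) (ModA 2 m)) 2, show (OfNat.ofNat 2 : ZMod 2) = 0 from rfl,
    map_zero]

lemma xA_sub_one_sq (l : Fin m) : (xA 2 m l - 1) ^ 2 = 0 := by
  linear_combination xA_pow_self (p := 2) l + (1 - xA 2 m l) * two_eq_zero_modA

lemma bElt_mul_bElt_of_mem {η ζ : Finset (Fin m)} {l : Fin m} (hη : l ∈ η) (hζ : l ∈ ζ) :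
    bElt m η * bElt m ζ = 0 := by
  rw [bElt, bElt, ← Finset.mul_prod_erase _ _ hη, ← Finset.mul_prod_erase _ _ hζ]
  linear_combination (∏ l' ∈ η.erase l, (xA 2 m l' - 1)) * (∏ l' ∈ ζ.erase l, (xA 2 m l' - 1)) *
    xA_sub_one_sq l

lemma bElt_mul_bElt_compl (κ : Finset (Fin m)) : bElt m κ * bElt m κᶜ = bElt m Finset.univ :=
  Finset.prod_mul_prod_compl κ _

lemma sum_smul_bElt_add_bElt_univ_mul_bElt_compl (S : Finset (Finset (Fin m)))
    (τ : Finset (Fin m) → ZMod 2) {κ : Finset (Fin m)} (hκS : κ ∈ S)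
    (hS : ∀ η ∈ S, η ⊆ κ → η = κ) (hκ : κᶜ.Nonempty) :
    (∑ η ∈ S, τ η • (bElt m η + bElt m Finset.univ)) * bElt m κᶜ = τ κ • bElt m Finset.univ := by
  obtain ⟨l, hl⟩ := hκ
  rw [Finset.sum_mul, Finset.sum_eq_single_of_mem κ hκS]
  · rw [smul_mul_assoc, add_mul, bElt_mul_bElt_compl, bElt_mul_bElt_of_mem (Finset.mem_univ l) hl,
      add_zero]
  · intro η hη hne
    obtain ⟨l', hl'η, hl'κ⟩ := Finset.not_subset.mp (mt (hS η hη) hne)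
    rw [← Finset.mem_compl] at hl'κ
    rw [smul_mul_assoc, add_mul, bElt_mul_bElt_of_mem hl'η hl'κ,
      bElt_mul_bElt_of_mem (Finset.mem_univ l') hl'κ, add_zero, smul_zero]

lemma ofGroupAlgebra_of'_single (l : Fin m) :
    ofGroupAlgebra 2 m (AddMonoidAlgebra.of' _ _ (Pi.single l 1)) = xA 2 m l := by
  rw [ofGroupAlgebra, AddMonoidAlgebra.lift_of']
  simp only [monomialHom, MonoidHom.coe_mk, OneHom.coe_mk, toAdd_ofAdd]
  rw [Finset.prod_eq_single l (fun l' _ h => by simp [h]) (by simp)]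
  rw [Pi.single_eq_same, ZMod.val_one, pow_one]

open AddMonoidAlgebra in
lemma exists_psi_eq_psi_mul_bElt (u : (Fin m → ZMod 2) → ZMod 2) (η : Finset (Fin m)) :
    ∃ z, psi 2 m z = psi 2 m u * bElt m η ∧ hammingNorm z ≤ 2 ^ η.card * hammingNorm u := by
  set r := equivFunOnFinite _ _ u * ∏ l ∈ η, (of' (ZMod 2) _ (Pi.single l 1) - 1)
  refine ⟨(equivFunOnFinite _ _).symm r, ?_, ?_⟩
  · rw [psi_eq_ofGroupAlgebra, psi_eq_ofGroupAlgebra, LinearEquiv.apply_symm_apply, map_mul,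
      map_prod, bElt]
    simp only [map_sub, map_one, ofGroupAlgebra_of'_single]
  · rw [← card_support_equivFunOnFinite, ← card_support_equivFunOnFinite,
      LinearEquiv.apply_symm_apply]
    exact card_support_mul_prod_of'_sub_one_le _ _ _

lemma psi_one : psi 2 m 1 = bElt m Finset.univ := by
  have hx (l : Fin m) : xA 2 m l - 1 = ∑ a : ZMod 2, xA 2 m l ^ a.val := by
    rw [show (Finset.univ : Finset (ZMod 2)) = {0, 1} from rfl, Finset.sum_pair zero_ne_one,
      ZMod.val_zero, ZMod.val_one, pow_zero, pow_one]
    linear_combination -two_eq_zero_modA (m := m)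
  simp only [bElt, hx, Fintype.prod_sum, psi, LinearMap.coe_mk, AddHom.coe_mk, Pi.one_apply,
    one_smul]

lemma hammingNorm_one_add {ι : Type*} [Fintype ι] (z : ι → ZMod 2) :
    hammingNorm (1 + z) + hammingNorm z = Fintype.card ι := by
  have h (i : ι) : (1 + z) i ≠ 0 ↔ z i = 0 := by
    rw [Pi.add_apply, Pi.one_apply]
    generalize z i = a
    revert a
    decide
  simp only [hammingNorm, h]
  exact Finset.card_filter_add_card_filter_not _

lemma eq_zero_iff_forall_hammingNorm_lt (t : ZMod 2) {z : (Fin m → ZMod 2) → ZMod 2}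
    (hz : hammingNorm z < 2 ^ (m - 1)) :
    t = 0 ↔ ∀ cv, psi 2 m cv = t • bElt m Finset.univ + psi 2 m z →
      hammingNorm cv < 2 ^ (m - 1) := by
  obtain rfl | rfl : t = 0 ∨ t = 1 := by
    revert t
    decide
  · simp only [true_iff, zero_smul, zero_add]
    intro cv hcv
    rwa [psi_injective 2 m hcv]
  · simp only [one_ne_zero, false_iff, not_forall, one_smul]
    refine ⟨1 + z, by rw [map_add, psi_one], ?_⟩
    have hcard := hammingNorm_one_add z
    rw [Fintype.card_fun, ZMod.card, Fintype.card_fin] at hcard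
    have h2m : 2 * 2 ^ (m - 1) ≤ 2 ^ m + 1 := by
      cases m with
      | zero => simp
      | succ m => simp [pow_succ']
    omega

end Binary

theorem decoding_step_general (m d : ℕ) (hd1 : 1 ≤ d) (hd2 : d ≤ m - 1)
    (τ : Finset (Fin m) → ZMod 2) (c f v : ModA 2 m)
    (hc : c = ∑ η ∈ Finset.univ.filter
        (fun η : Finset (Fin m) => m - d ≤ η.card ∧ η.card < m),
      τ η • (bElt m η + bElt m Finset.univ))
    (cf : (Fin m → ZMod 2) → ZMod 2) (hcf : psi 2 m cf = f)
    (hwf : hammingNorm cf ≤ 2 ^ (m - d - 1) - 1)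
    (hv : v = c + f) :
    ∀ κ : Finset (Fin m), κ.card = m - d →
      v * bElt m κᶜ = τ κ • bElt m Finset.univ + f * bElt m κᶜ ∧
      (τ κ = 0 ↔ ∀ cv : (Fin m → ZMod 2) → ZMod 2,
          psi 2 m cv = v * bElt m κᶜ → hammingNorm cv < 2 ^ (m - 1)) := by
  intro κ hκ
  have hκc : κᶜ.card = d := by
    rw [Finset.card_compl, hκ, Fintype.card_fin]
    omega
  have hvb : v * bElt m κᶜ = τ κ • bElt m Finset.univ + f * bElt m κᶜ := by
    rw [hv, add_mul, hc, sum_smul_bElt_add_bElt_univ_mul_bElt_compl _ τ ?_ ?_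
      (Finset.card_pos.mp (by omega))]
    · simp only [Finset.mem_filter, Finset.mem_univ, true_and]
      omega
    · intro η hη hηκ
      simp only [Finset.mem_filter, Finset.mem_univ, true_and] at hη
      exact Finset.eq_of_subset_of_card_le hηκ (by omega)
  obtain ⟨z, hz, hzw⟩ := exists_psi_eq_psi_mul_bElt cf κᶜ
  rw [hκc] at hzw
  have hz_lt : hammingNorm z < 2 ^ (m - 1) := calc
    hammingNorm z ≤ 2 ^ d * (2 ^ (m - d - 1) - 1) := hzw.trans (Nat.mul_le_mul_left _ hwf)
    _ < 2 ^ d * 2 ^ (m - d - 1) := by gcongr; exact Nat.sub_lt (by positivity) one_pos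
    _ = 2 ^ (m - 1) := by rw [← pow_add]; congr 1; omega
  refine ⟨hvb, ?_⟩
  rw [hvb, ← hcf, ← hz]
  exact eq_zero_iff_forall_hammingNorm_lt (τ κ) hz_lt

/-- decoding step for binary homogeneous Reed–Muller codes: with
`c = Σ_{m-d ≤ |η| < m} τ(η)(b(η) + 1̂)`, `w(f) ≤ 2^{m-d-1} - 1` and `v = c + f`,
for every `κ` with `|κ| = m - d` one has `v·b(κᶜ) = τ(κ)·1̂ + f·b(κᶜ)`, and
`τ(κ) = 0` iff `w(v·b(κᶜ)) < 2^{m-1}` (weights measured via the coefficient vectors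
under `ψ`). -/
theorem decoding_step (m d : ℕ) (hm : 2 ≤ m) (hd1 : 1 ≤ d) (hd2 : d ≤ m - 1)
    (τ : Finset (Fin m) → ZMod 2) (c f v : ModA 2 m)
    (hc : c = ∑ η ∈ Finset.univ.filter
        (fun η : Finset (Fin m) => m - d ≤ η.card ∧ η.card < m),
      τ η • (bElt m η + bElt m Finset.univ))
    (cf : (Fin m → ZMod 2) → ZMod 2) (hcf : psi 2 m cf = f)
    (hwf : hammingNorm cf ≤ 2 ^ (m - d - 1) - 1)
    (hv : v = c + f) :
    ∀ κ : Finset (Fin m), κ.card = m - d →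
      v * bElt m κᶜ = τ κ • bElt m Finset.univ + f * bElt m κᶜ ∧
      (τ κ = 0 ↔ ∀ cv : (Fin m → ZMod 2) → ZMod 2,
          psi 2 m cv = v * bElt m κᶜ → hammingNorm cv < 2 ^ (m - 1)) :=
  decoding_step_general m d hd1 hd2 τ c f v hc cf hcf hwf hv
end

section
/- Let m ≥ 1 and let d be an integer with 1 ≤ d ≤ m. Then the binary homogeneous Reed–Muller code HRMC_d(m,2) has F_2-dimension Σ_{t=1}^{d} C(m,t), and the minimum Hamming weight of a nonzero codeword of HRMC_d(m,2) equals 2^{m−d}. -/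
open MvPolynomial

/-! Over `F₂` a homogeneous polynomial of degree `d ≥ 1` evaluates, since `x ^ k = x`, to a
combination of squarefree monomials `∏_{i ∈ S} Y_i` with `1 ≤ |S| ≤ d`, and each of these is itself
such an evaluation (raise one variable to pad the degree). Independence of these monomial vectors
and the weight bound come from one computation: summing a combination over a subcube that frees
the coordinates of a monomial `S₀` of maximal size and fixes the others returns the coefficient of
`S₀`, because the sum of a monomial over such a subcube vanishes unless the monomial contains
`S₀`. So each of the `2 ^ (m - |S₀|)` parallel subcubes contains a nonzero point, while
`∏_{i ∈ S} Y_i` with `|S| = d` has weight exactly `2 ^ (m - d)`. -/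

open Finset

theorem zmod_two_ne_zero_iff : ∀ x : ZMod 2, x ≠ 0 ↔ x = 1 := by
  decide

theorem zmod_two_pow_of_ne_zero (x : ZMod 2) {k : ℕ} (hk : k ≠ 0) : x ^ k = x := by
  fin_cases x
  exacts [zero_pow hk, one_pow k]

section MonomialVec

variable {ι : Type*}

theorem card_filter_card_mem [Fintype ι] (T : Finset ℕ) :
    #{S : Finset ι | #S ∈ T} = ∑ t ∈ T, (Fintype.card ι).choose t := by
  rw [card_eq_sum_card_fiberwise (f := card) (t := T) fun S hS => by simpa using hS]
  refine sum_congr rfl fun t ht => ?_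
  rw [← card_univ, ← card_powersetCard]
  congr 1
  ext S
  simp +contextual [ht]

def monomialVec {R : Type*} [CommMonoid R] (S : Finset ι) : (ι → R) → R :=
  fun P => ∏ i ∈ S, P i

variable [Fintype ι] [DecidableEq ι]

theorem card_piFinset_ite {α : Type*} (S : Finset ι) (A B : Finset α) :
    #(Fintype.piFinset fun i => if i ∈ S then A else B) =
      #A ^ #S * #B ^ (Fintype.card ι - #S) := by
  simp only [Fintype.card_piFinset, apply_ite card, prod_ite, prod_const]
  rw [filter_notMem_eq_sdiff, ← compl_eq_univ_sdiff, card_compl]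
  simp

theorem hammingNorm_monomialVec (S : Finset ι) :
    hammingNorm (monomialVec S : (ι → ZMod 2) → ZMod 2) = 2 ^ (Fintype.card ι - #S) := by
  have : ({P | monomialVec S P ≠ 0} : Finset (ι → ZMod 2)) =
      Fintype.piFinset fun i => if i ∈ S then {1} else univ := by
    ext P
    simp only [monomialVec, mem_filter, mem_univ, true_and, prod_ne_zero_iff,
      Fintype.mem_piFinset]
    refine ⟨fun h i => ?_, fun h i hi => ?_⟩
    · split_ifs with hi
      · simpa [← zmod_two_ne_zero_iff] using h i hi
      · exact mem_univ _
    · simpa [hi, zmod_two_ne_zero_iff] using h i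
  rw [hammingNorm, this, card_piFinset_ite]
  simp

def subcube (S : Finset ι) (z : ι → ZMod 2) : Finset (ι → ZMod 2) :=
  Fintype.piFinset fun i => if i ∈ S then univ else {z i}

theorem sum_subcube_monomialVec (S₀ S : Finset ι) (z : ι → ZMod 2) :
    ∑ P ∈ subcube S₀ z, monomialVec S P = if S₀ ⊆ S then ∏ i ∈ S \ S₀, z i else 0 := by
  have hprod : ∀ P : ι → ZMod 2, monomialVec S P = ∏ i, if i ∈ S then P i else 1 := fun P => by
    rw [prod_ite_mem, univ_inter, monomialVec]
  simp_rw [subcube, hprod]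
  rw [← prod_univ_sum (f := fun i x => if i ∈ S then x else 1)]
  -- a free coordinate contributes `∑ x : ZMod 2, x = 1` if it lies in `S`, else `∑ x, 1 = 0`
  split_ifs with h
  · rw [← univ_inter (S \ S₀), ← prod_ite_mem]
    refine prod_congr rfl fun i _ => ?_
    by_cases hi₀ : i ∈ S₀
    · have hi : i ∈ S := h hi₀
      simp only [hi₀, ↓reduceIte, hi, mem_sdiff, not_true_eq_false, and_false]
      decide
    · by_cases hi : i ∈ S <;> simp [hi₀, hi]
  · obtain ⟨i, hi₀, hi⟩ := not_subset.mp h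
    exact prod_eq_zero (mem_univ i) (by
      simp only [hi₀, ↓reduceIte, hi, sum_const, card_univ, ZMod.card, nsmul_eq_mul, mul_one]
      decide)

theorem sum_subcube_linearCombination (l : Finset ι →₀ ZMod 2) {S₀ : Finset ι}
    (hS₀ : S₀ ∈ l.support) (hmax : ∀ S ∈ l.support, #S ≤ #S₀) (z : ι → ZMod 2) :
    ∑ P ∈ subcube S₀ z, Finsupp.linearCombination (ZMod 2) monomialVec l P = l S₀ := by
  simp only [Finsupp.linearCombination_apply, Finsupp.sum, Finset.sum_apply, Pi.smul_apply,
    smul_eq_mul]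
  rw [sum_comm]
  simp_rw [← mul_sum, sum_subcube_monomialVec]
  rw [sum_eq_single S₀]
  · simp
  · intro S hS hne
    rw [if_neg fun h => hne (eq_of_subset_of_card_le h (hmax S hS)).symm, mul_zero]
  · intro h
    exact absurd hS₀ h

theorem linearIndependent_monomialVec :
    LinearIndependent (ZMod 2) (monomialVec : Finset ι → (ι → ZMod 2) → ZMod 2) := by
  rw [linearIndependent_iff]
  intro l hl
  by_contra hne
  obtain ⟨S₀, hS₀, hmax⟩ :=
    l.support.exists_max_image card (Finsupp.support_nonempty_iff.mpr hne)
  have := sum_subcube_linearCombination l hS₀ hmax 0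
  simp only [hl, Pi.zero_apply, sum_const_zero] at this
  exact Finsupp.mem_support_iff.mp hS₀ this.symm

theorem finrank_span_monomialVec_image (𝒮 : Finset (Finset ι)) :
    Module.finrank (ZMod 2) (Submodule.span (ZMod 2) (monomialVec '' (𝒮 : Set (Finset ι)) :
      Set ((ι → ZMod 2) → ZMod 2))) = #𝒮 := by
  rw [Set.image_eq_range]
  exact (finrank_span_eq_card (linearIndependent_monomialVec.comp _ Subtype.val_injective)).trans
    (Fintype.card_coe 𝒮)

theorem two_pow_le_hammingNorm_linearCombination (l : Finset ι →₀ ZMod 2) {S₀ : Finset ι}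
    (hS₀ : S₀ ∈ l.support) (hmax : ∀ S ∈ l.support, #S ≤ #S₀) :
    2 ^ (Fintype.card ι - #S₀) ≤
      hammingNorm (Finsupp.linearCombination (ZMod 2) (monomialVec (R := ZMod 2)) l) := by
  have hbase : #(Fintype.piFinset fun i => if i ∈ S₀ then {0} else (univ : Finset (ZMod 2))) =
      2 ^ (Fintype.card ι - #S₀) := by
    rw [card_piFinset_ite]
    simp
  rw [← hbase, hammingNorm]
  -- sending each point to the base point of its subcube maps the support onto all base points
  refine card_le_card_of_surjOn (fun P i => if i ∈ S₀ then 0 else P i) fun z hz => ?_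
  obtain ⟨P, hP, hvP⟩ := exists_ne_zero_of_sum_ne_zero
    ((sum_subcube_linearCombination l hS₀ hmax z).trans_ne (Finsupp.mem_support_iff.mp hS₀))
  refine ⟨P, by simpa using hvP, funext fun i => ?_⟩
  have hzi := Fintype.mem_piFinset.mp (mem_coe.mp hz) i
  have hPi := Fintype.mem_piFinset.mp hP i
  split_ifs at hzi hPi ⊢ <;> simp_all

theorem two_pow_le_hammingNorm_of_mem_span {𝒮 : Set (Finset ι)} {d : ℕ}
    (h𝒮 : ∀ S ∈ 𝒮, #S ≤ d) {v : (ι → ZMod 2) → ZMod 2}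
    (hv : v ∈ Submodule.span (ZMod 2) (monomialVec '' 𝒮)) (hv0 : v ≠ 0) :
    2 ^ (Fintype.card ι - d) ≤ hammingNorm v := by
  obtain ⟨l, hl𝒮, rfl⟩ := (Finsupp.mem_span_image_iff_linearCombination (ZMod 2)).mp hv
  have hl : l.support.Nonempty := by
    rw [Finsupp.support_nonempty_iff]
    rintro rfl
    exact hv0 (map_zero _)
  obtain ⟨S₀, hS₀, hmax⟩ := l.support.exists_max_image card hl
  calc 2 ^ (Fintype.card ι - d) ≤ 2 ^ (Fintype.card ι - #S₀) :=
        Nat.pow_le_pow_right two_pos (Nat.sub_le_sub_left (h𝒮 S₀ (hl𝒮 hS₀)) _)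
    _ ≤ _ := two_pow_le_hammingNorm_linearCombination l hS₀ hmax

end MonomialVec

section Polynomial

variable {σ : Type*}

theorem card_support_le_degree (u : σ →₀ ℕ) : #u.support ≤ u.degree := by
  rw [Finsupp.degree, card_eq_sum_ones]
  exact sum_le_sum fun i hi => Nat.one_le_iff_ne_zero.mpr (Finsupp.mem_support_iff.mp hi)

theorem eval_eq_sum_monomialVec (f : MvPolynomial σ (ZMod 2)) :
    (fun P => eval P f) = ∑ u ∈ f.support, f.coeff u • monomialVec u.support := by
  funext P
  conv_lhs => rw [f.as_sum]
  simp only [eval_sum, eval_monomial, Finset.sum_apply, Pi.smul_apply, smul_eq_mul, monomialVec,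
    Finsupp.prod]
  refine sum_congr rfl fun u _ => congrArg _ (prod_congr rfl fun i hi => ?_)
  exact zmod_two_pow_of_ne_zero _ (Finsupp.mem_support_iff.mp hi)

theorem exists_isHomogeneous_eval_eq_monomialVec [DecidableEq σ] {S : Finset σ} {d : ℕ}
    (hS : S.Nonempty) (hSd : #S ≤ d) :
    ∃ f : MvPolynomial σ (ZMod 2),
      f.IsHomogeneous d ∧ (fun P : σ → ZMod 2 => eval P f) = monomialVec S := by
  obtain ⟨i₀, hi₀⟩ := hS
  -- `d - #S + 1 ≠ 0`, so the padded variable still evaluates like `Y i₀`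
  refine ⟨X i₀ ^ (d - #S + 1) * ∏ i ∈ S.erase i₀, X i, ?_, ?_⟩
  · have h := (isHomogeneous_X_pow i₀ (d - #S + 1)).mul
      (IsHomogeneous.prod (S.erase i₀) _ (fun _ => 1) fun i _ => isHomogeneous_X (ZMod 2) i)
    convert h using 1
    simp only [sum_const, smul_eq_mul, mul_one, card_erase_of_mem hi₀]
    have := card_pos.mpr ⟨i₀, hi₀⟩
    omega
  · funext P
    simp only [eval_mul, eval_pow, eval_X, eval_prod, monomialVec,
      zmod_two_pow_of_ne_zero _ (Nat.succ_ne_zero _)]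
    exact mul_prod_erase S P hi₀

end Polynomial

theorem hrmc_two_eq_span_monomialVec {m d : ℕ} (hd : 1 ≤ d) :
    HRMC (ZMod 2) m d = Submodule.span (ZMod 2) (monomialVec '' {S | #S ∈ Icc 1 d}) := by
  apply le_antisymm
  · rw [HRMC, Submodule.span_le]
    rintro _ ⟨f, hf, rfl⟩
    rw [eval_eq_sum_monomialVec]
    refine Submodule.sum_mem _ fun u hu =>
      Submodule.smul_mem _ _ (Submodule.subset_span ⟨u.support, ?_, rfl⟩)
    have hdeg : u.degree = d := by
      rw [Finsupp.degree_eq_weight_one]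
      exact hf (Finsupp.mem_support_iff.mp hu)
    have hu0 : u ≠ 0 := by
      rintro rfl
      rw [map_zero] at hdeg
      omega
    exact mem_Icc.mpr ⟨card_pos.mpr (Finsupp.support_nonempty_iff.mpr hu0),
      hdeg ▸ card_support_le_degree u⟩
  · rw [Submodule.span_le]
    rintro _ ⟨S, hS, rfl⟩
    obtain ⟨f, hf, hfS⟩ := exists_isHomogeneous_eval_eq_monomialVec
      (one_le_card.mp (mem_Icc.mp hS).1) (mem_Icc.mp hS).2
    exact Submodule.subset_span ⟨f, hf, hfS.symm⟩

theorem hrmc_binary_parameters_general (m d : ℕ) (hd1 : 1 ≤ d) (hd2 : d ≤ m) :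
    Module.finrank (ZMod 2) (HRMC (ZMod 2) m d) = ∑ t ∈ Finset.Icc 1 d, m.choose t ∧
    IsLeast {n : ℕ | ∃ v ∈ HRMC (ZMod 2) m d, v ≠ 0 ∧ hammingNorm v = n} (2 ^ (m - d)) := by
  rw [hrmc_two_eq_span_monomialVec hd1]
  refine ⟨?_, ?_, ?_⟩
  · rw [← coe_filter_univ, finrank_span_monomialVec_image, card_filter_card_mem, Fintype.card_fin]
  · obtain ⟨S, -, hSd⟩ := exists_subset_card_eq (s := (univ : Finset (Fin m))) (by simpa using hd2)
    have hweight := hammingNorm_monomialVec S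
    rw [hSd, Fintype.card_fin] at hweight
    refine ⟨monomialVec S, Submodule.subset_span ⟨S, mem_Icc.mpr ⟨hSd ▸ hd1, hSd.le⟩, rfl⟩,
      fun h => ?_, hweight⟩
    rw [h, hammingNorm_zero] at hweight
    exact (pow_pos two_pos _).ne hweight
  · rintro _ ⟨v, hv, hv0, rfl⟩
    have := two_pow_le_hammingNorm_of_mem_span (d := d)
      (fun S (hS : #S ∈ Icc 1 d) => (mem_Icc.mp hS).2) hv hv0
    rwa [Fintype.card_fin] at this

/-- the binary homogeneous Reed–Muller code `HRMC_d(m,2)` has dimension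
`Σ_{t=1}^{d} C(m,t)` and minimum nonzero Hamming weight `2^{m-d}`. -/
theorem hrmc_binary_parameters (m d : ℕ) (hm : 1 ≤ m) (hd1 : 1 ≤ d) (hd2 : d ≤ m) :
    Module.finrank (ZMod 2) (HRMC (ZMod 2) m d) = ∑ t ∈ Finset.Icc 1 d, m.choose t ∧
    IsLeast {n : ℕ | ∃ v ∈ HRMC (ZMod 2) m d, v ≠ 0 ∧ hammingNorm v = n} (2 ^ (m - d)) :=
  hrmc_binary_parameters_general m d hd1 hd2
end
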